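/- arXiv:1101.1828 — 6 statements merged into one kernel-verified Lean document; each statement's English description precedes it below -/
import Mathlib

section
/- The ruler sequence ω has the nonoverlapping property: if k, l, n are natural numbers with n ≥ 1 and the finite words ω(k+1)ω(k+2)…ω(k+n) and ω(l+1)ω(l+2)…ω(l+n) are equal, then |l − k| = 0 or |l − k| ≥ n. -/
private lemma ruler_mid (a b M : ℕ) (ha : 0 < a) (hab : a < b)
    (hva : padicValNat 2 a = M) (hvb : padicValNat 2 b = M) :
    ∃ c, a < c ∧ c ≤ b ∧ M < padicValNat 2 c := by
  have h2 : Fact (Nat.Prime 2) := ⟨Nat.prime_two⟩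
  have hdva : 2 ^ M ∣ a := hva ▸ pow_padicValNat_dvd
  have hdvb : 2 ^ M ∣ b := hvb ▸ pow_padicValNat_dvd
  have hnota : ¬ 2 ^ (M + 1) ∣ a := by
    rw [padicValNat_dvd_iff_le ha.ne']; omega
  have hpow : 0 < 2 ^ M := Nat.pow_pos (by norm_num)
  obtain ⟨u, hu⟩ := hdva
  have hu2 : ¬ 2 ∣ u := by
    intro hdu
    apply hnota
    rw [hu, pow_succ]
    exact mul_dvd_mul_left _ hdu
  refine ⟨a + 2 ^ M, by omega, ?_, ?_⟩
  · have hdvd : 2 ^ M ∣ b - a := Nat.dvd_sub hdvb (hu ▸ Dvd.intro u rfl)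
    have := Nat.le_of_dvd (by omega) hdvd
    omega
  · have hdvd : 2 ^ (M + 1) ∣ a + 2 ^ M := by
      rw [hu, pow_succ]
      have : 2 ∣ u + 1 := by omega
      obtain ⟨w, hw⟩ := this
      exact ⟨w, by rw [show 2 ^ M * u + 2 ^ M = 2 ^ M * (u + 1) by ring, hw]; ring⟩
    have hne : a + 2 ^ M ≠ 0 := by omega
    have := (padicValNat_dvd_iff_le hne).mp hdvd
    omega

private lemma ruler_nonoverlap (k d n : ℕ) (hd : 1 ≤ d) (hn : 1 ≤ n)
    (h : ∀ j, 1 ≤ j → j ≤ n → padicValNat 2 (k + j) = padicValNat 2 (k + d + j)) :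
    n ≤ d := by
  by_contra hnd
  push_neg at hnd
  -- valuations agree under shift by d on [k+1, k+n]
  have hv : ∀ i, k + 1 ≤ i → i ≤ k + n → padicValNat 2 i = padicValNat 2 (i + d) := by
    intro i h1 h2
    have := h (i - k) (by omega) (by omega)
    have e1 : k + (i - k) = i := by omega
    have e2 : k + d + (i - k) = i + d := by omega
    rwa [e1, e2] at this
  set I : Finset ℕ := Finset.Icc (k + 1) (k + n + d) with hI
  have hne : I.Nonempty := ⟨k + 1, Finset.mem_Icc.mpr (by omega)⟩
  obtain ⟨m, hm, hmax⟩ := I.exists_max_image (padicValNat 2) hne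
  rw [Finset.mem_Icc] at hm
  set M := padicValNat 2 m with hM
  rcases le_or_gt m (k + n) with hcase | hcase
  · -- m in the shiftable window: m + d has same valuation
    have hvm : padicValNat 2 (m + d) = M := (hv m hm.1 hcase).symm
    obtain ⟨c, hc1, hc2, hc3⟩ := ruler_mid m (m + d) M (by omega) (by omega) rfl hvm
    have hcI : c ∈ I := Finset.mem_Icc.mpr (by omega)
    have := hmax c hcI
    omega
  · -- m in the tail: m - d has same valuation
    have h1 : k + 1 ≤ m - d := by omega
    have h2 : m - d ≤ k + n := by omega
    have hvm : padicValNat 2 (m - d) = M := by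
      have := hv (m - d) h1 h2
      rw [show m - d + d = m by omega] at this
      exact this
    obtain ⟨c, hc1, hc2, hc3⟩ := ruler_mid (m - d) m M (by omega) (by omega) hvm rfl
    have hcI : c ∈ I := Finset.mem_Icc.mpr (by omega)
    have := hmax c hcI
    omega

theorem stmt_3 (k l n : ℕ) (hn : 1 ≤ n)
    (h : ∀ j, 1 ≤ j → j ≤ n → padicValNat 2 (k + j) = padicValNat 2 (l + j)) :
    k = l ∨ n ≤ max (l - k) (k - l) := by
  rcases Nat.lt_trichotomy k l with hlt | heq | hgt
  · right
    have := ruler_nonoverlap k (l - k) n (by omega) hn (by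
      intro j h1 h2
      rw [show k + (l - k) + j = l + j by omega]
      exact h j h1 h2)
    omega
  · exact Or.inl heq
  · right
    have := ruler_nonoverlap l (k - l) n (by omega) hn (by
      intro j h1 h2
      rw [show l + (k - l) + j = k + j by omega]
      exact (h j h1 h2).symm)
    omega
end

section
/- Let q ≥ 1 and m_1, …, m_q be natural numbers, and set Ω = {i ∈ ℕ : ω(i+j) = m_j for all 1 ≤ j < q and ω(i+q) ≥ m_q}. If Ω is nonempty, then there exist g_0, g ∈ ℕ with g a power of 2, g > g_0, and Ω = {g_0 + n·g : n ∈ ℕ}; moreover g = max({2^{m_j + 1} : 1 ≤ j ≤ q−1} ∪ {2^{m_q}}). -/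
private lemma aux_mod (c x : ℕ) (h1 : 2 ^ c ∣ x) (h2 : ¬ 2 ^ (c + 1) ∣ x) :
    x % 2 ^ (c + 1) = 2 ^ c := by
  obtain ⟨k, rfl⟩ := h1
  have hk : k % 2 = 1 := by
    rcases Nat.mod_two_eq_zero_or_one k with h | h
    · exfalso
      apply h2
      obtain ⟨t, rfl⟩ := Nat.dvd_iff_mod_eq_zero.mpr h
      rw [pow_succ]
      exact ⟨t, by ring⟩
    · exact h
  rw [pow_succ, Nat.mul_mod_mul_left, hk, mul_one]

theorem stmt_5 (q : ℕ) (hq : 1 ≤ q) (m : ℕ → ℕ)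
    (Ω : Set ℕ)
    (hΩ : Ω = {i : ℕ | (∀ j, 1 ≤ j → j < q → padicValNat 2 (i + j) = m j) ∧
                        m q ≤ padicValNat 2 (i + q)})
    (hne : Ω.Nonempty) :
    ∃ g₀ g : ℕ, (∃ e : ℕ, g = 2 ^ e) ∧ g₀ < g ∧
      Ω = {i : ℕ | ∃ n : ℕ, i = g₀ + n * g} ∧
      g = max ((Finset.Ico 1 q).sup fun j => 2 ^ (m j + 1)) (2 ^ m q) := by
  classical
  haveI : Fact (Nat.Prime 2) := ⟨Nat.prime_two⟩
  set S := (Finset.Ico 1 q).sup (fun j => 2 ^ (m j + 1)) with hS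
  set g := max S (2 ^ m q) with hg
  -- g is a power of 2, and attained
  have hatt : (∃ e : ℕ, g = 2 ^ e) ∧
      (g = 2 ^ m q ∨ ∃ j ∈ Finset.Ico 1 q, g = 2 ^ (m j + 1)) := by
    rcases le_total S (2 ^ m q) with h | h
    · have : g = 2 ^ m q := max_eq_right h
      exact ⟨⟨m q, this⟩, Or.inl this⟩
    · have hgS : g = S := max_eq_left h
      have hSpos : 0 < S := lt_of_lt_of_le (Nat.pow_pos (by norm_num)) h
      have hne' : (Finset.Ico 1 q).Nonempty := by
        by_contra hemp
        rw [Finset.not_nonempty_iff_eq_empty] at hemp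
        rw [hS, hemp, Finset.sup_empty] at hSpos
        simp at hSpos
      obtain ⟨j, hjmem, hj⟩ := Finset.exists_mem_eq_sup _ hne' (fun j => 2 ^ (m j + 1))
      exact ⟨⟨m j + 1, by rw [hgS, hS, hj]⟩, Or.inr ⟨j, hjmem, by rw [hgS, hS, hj]⟩⟩
  obtain ⟨⟨e, he⟩, hatt⟩ := hatt
  have hgpos : 0 < g := by rw [he]; exact Nat.pow_pos (by norm_num)
  -- divisibility of moduli into g
  have hdvd_of_le : ∀ a : ℕ, 2 ^ a ≤ g → 2 ^ a ∣ g := by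
    intro a ha
    rw [he] at ha ⊢
    exact pow_dvd_pow 2 ((Nat.pow_le_pow_iff_right (by norm_num)).mp ha)
  have hdvdj : ∀ j, 1 ≤ j → j < q → 2 ^ (m j + 1) ∣ g := by
    intro j h1 h2
    apply hdvd_of_le
    exact le_trans (Finset.le_sup (f := fun j => 2 ^ (m j + 1))
      (Finset.mem_Ico.mpr ⟨h1, h2⟩)) (le_max_left _ _)
  have hdvdq : 2 ^ m q ∣ g := hdvd_of_le _ (le_max_right _ _)
  -- membership characterization
  have hmem : ∀ i : ℕ, i ∈ Ω ↔
      (∀ j, 1 ≤ j → j < q → (2 ^ m j ∣ i + j ∧ ¬ 2 ^ (m j + 1) ∣ i + j)) ∧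
        2 ^ m q ∣ i + q := by
    intro i
    rw [hΩ]
    simp only [Set.mem_setOf_eq]
    constructor
    · rintro ⟨h1, h2⟩
      refine ⟨fun j hj1 hj2 => ?_, ?_⟩
      · have hne0 : i + j ≠ 0 := by omega
        constructor
        · rw [padicValNat_dvd_iff_le hne0, h1 j hj1 hj2]
        · rw [padicValNat_dvd_iff_le hne0, h1 j hj1 hj2]; omega
      · have hne0 : i + q ≠ 0 := by omega
        rw [padicValNat_dvd_iff_le hne0]; exact h2
    · rintro ⟨h1, h2⟩
      refine ⟨fun j hj1 hj2 => ?_, ?_⟩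
      · have hne0 : i + j ≠ 0 := by omega
        obtain ⟨hd, hnd⟩ := h1 j hj1 hj2
        rw [padicValNat_dvd_iff_le hne0] at hd hnd
        omega
      · have hne0 : i + q ≠ 0 := by omega
        rw [← padicValNat_dvd_iff_le hne0]; exact h2
  -- invariance under congruence mod g
  have hinv : ∀ a b : ℕ, a % g = b % g → a ∈ Ω → b ∈ Ω := by
    intro a b hab ha
    rw [hmem] at ha ⊢
    obtain ⟨h1, h2⟩ := ha
    have key : ∀ d j : ℕ, d ∣ g → (d ∣ a + j ↔ d ∣ b + j) := by
      intro d j hd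
      have : (a + j) % d = (b + j) % d := by
        have h1 : a % d = b % d := Nat.ModEq.of_dvd hd hab
        calc (a + j) % d = (a % d + j % d) % d := by rw [Nat.add_mod]
          _ = (b % d + j % d) % d := by rw [h1]
          _ = (b + j) % d := by rw [← Nat.add_mod]
      rw [Nat.dvd_iff_mod_eq_zero, Nat.dvd_iff_mod_eq_zero, this]
    refine ⟨fun j hj1 hj2 => ?_, ?_⟩
    · obtain ⟨hd, hnd⟩ := h1 j hj1 hj2
      have d1 : 2 ^ m j ∣ g := dvd_trans (pow_dvd_pow 2 (Nat.le_succ _)) (hdvdj j hj1 hj2)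
      exact ⟨(key _ j d1).mp hd, fun hc => hnd ((key _ j (hdvdj j hj1 hj2)).mpr hc)⟩
    · exact (key _ q hdvdq).mp h2
  -- uniqueness of residue class mod g
  have huniq : ∀ a b : ℕ, a ∈ Ω → b ∈ Ω → a % g = b % g := by
    intro a b ha hb
    rw [hmem] at ha hb
    have cancel : ∀ j : ℕ, (a + j) % g = (b + j) % g → a % g = b % g := by
      intro j h
      have := Nat.ModEq.add_right_cancel' j (h : Nat.ModEq g (a + j) (b + j))
      exact this
    rcases hatt with hgq | ⟨j, hjmem, hgj⟩
    · apply cancel q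
      have h1 : (a + q) % g = 0 := Nat.dvd_iff_mod_eq_zero.mp (hgq ▸ ha.2)
      have h2 : (b + q) % g = 0 := Nat.dvd_iff_mod_eq_zero.mp (hgq ▸ hb.2)
      rw [h1, h2]
    · obtain ⟨hj1, hj2⟩ := Finset.mem_Ico.mp hjmem
      apply cancel j
      obtain ⟨ha1, ha2⟩ := ha.1 j hj1 hj2
      obtain ⟨hb1, hb2⟩ := hb.1 j hj1 hj2
      rw [hgj, aux_mod _ _ ha1 ha2, aux_mod _ _ hb1 hb2]
  -- least element
  have hne' : ∃ i, i ∈ Ω := hne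
  set g₀ := Nat.find hne' with hg0
  have hg0Ω : g₀ ∈ Ω := Nat.find_spec hne'
  have hg0min : ∀ i, i ∈ Ω → g₀ ≤ i := fun i hi => Nat.find_min' hne' hi
  have hg0lt : g₀ < g := by
    by_contra hc
    push_neg at hc
    have hmem' : g₀ - g ∈ Ω := by
      apply hinv g₀ (g₀ - g) _ hg0Ω
      have : g₀ - g + g = g₀ := by omega
      calc g₀ % g = (g₀ - g + g) % g := by rw [this]
        _ = (g₀ - g) % g := Nat.add_mod_right _ _
    have := hg0min _ hmem'
    omega
  refine ⟨g₀, g, ⟨e, he⟩, hg0lt, ?_, rfl⟩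
  ext i
  simp only [Set.mem_setOf_eq]
  constructor
  · intro hi
    have hle : g₀ ≤ i := hg0min i hi
    have hmod : i % g = g₀ % g := huniq i g₀ hi hg0Ω
    have hdvd : g ∣ i - g₀ := (Nat.modEq_iff_dvd' hle).mp hmod.symm
    obtain ⟨n, hn⟩ := hdvd
    exact ⟨n, by rw [mul_comm] at hn; omega⟩
  · rintro ⟨n, rfl⟩
    apply hinv g₀ _ _ hg0Ω
    rw [Nat.add_mul_mod_self_right]
end

section
/- Let (b_n)_{n≥1} be a sequence of powers of 2, define a_0 = 1 and a_{k+1} = 2·b_{k+1}·a_k + 2·b_{k+1} − 1, and let p(k,l) = ∏_{i=1}^{l} 2·b_{k+i}. Then for all m, k, l ∈ ℕ, z_{k+l}(m) = z_k(m · p(k,l)), where z_k(i) = i·a_k + ∑_{j=1}^{i} ω(j) and ω is the 2-adic valuation. -/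
lemma sum_val_eq_factorial (n : ℕ) :
    ∑ j ∈ Finset.Icc 1 n, padicValNat 2 j = padicValNat 2 (Nat.factorial n) := by
  induction n with
  | zero => simp
  | succ n ih =>
    rw [Finset.sum_Icc_succ_top (by omega), ih, Nat.factorial_succ,
      padicValNat.mul (by omega) (Nat.factorial_ne_zero n), add_comm]

lemma val_factorial_pow_mul (t m : ℕ) :
    padicValNat 2 (Nat.factorial (2 ^ t * m)) =
      padicValNat 2 (Nat.factorial m) + m * (2 ^ t - 1) := by
  induction t with
  | zero => simp
  | succ t ih =>
    have : (2 : ℕ) ^ (t + 1) * m = 2 * (2 ^ t * m) := by ring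
    rw [this, padicValNat_factorial_mul, ih]
    have h1 : (1 : ℕ) ≤ 2 ^ t := Nat.one_le_two_pow
    have : (2:ℕ) ^ (t+1) = 2 * 2 ^ t := by ring
    rw [this]
    have hxm : m ≤ m * 2 ^ t := Nat.le_mul_of_pos_right m (by positivity)
    have e1 : m * (2 ^ t - 1) = m * 2 ^ t - m := by rw [Nat.mul_sub, mul_one]
    have e2 : m * (2 * 2 ^ t - 1) = 2 * (m * 2 ^ t) - m := by
      rw [Nat.mul_sub, mul_one]; ring_nf
    rw [e1, e2, mul_comm (2 ^ t) m]
    omega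

theorem stmt_8 (b : ℕ → ℕ) (hb : ∀ n, 1 ≤ n → ∃ e : ℕ, b n = 2 ^ e)
    (a : ℕ → ℕ) (ha0 : a 0 = 1)
    (haS : ∀ k, a (k + 1) = 2 * b (k + 1) * a k + 2 * b (k + 1) - 1)
    (z : ℕ → ℕ → ℕ)
    (hz : ∀ k i, z k i = i * a k + ∑ j ∈ Finset.Icc 1 i, padicValNat 2 j)
    (p : ℕ → ℕ → ℕ)
    (hp : ∀ k l, p k l = ∏ i ∈ Finset.Icc 1 l, 2 * b (k + i))
    (m k l : ℕ) :
    z (k + l) m = z k (m * p k l) := by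
  -- single step lemma
  have step : ∀ j m, z (j + 1) m = z j (m * (2 * b (j + 1))) := by
    intro j n
    obtain ⟨e, he⟩ := hb (j + 1) (by omega)
    rw [hz, hz, sum_val_eq_factorial, sum_val_eq_factorial, haS, he]
    have h2 : (2 : ℕ) * 2 ^ e = 2 ^ (e + 1) := by ring
    rw [h2, mul_comm n (2 ^ (e+1)), val_factorial_pow_mul]
    have h1 : (1 : ℕ) ≤ 2 ^ (e+1) := Nat.one_le_two_pow
    have hx1 : (1:ℕ) ≤ 2 ^ (e + 1) * a j + 2 ^ (e + 1) := Nat.one_le_two_pow.trans (Nat.le_add_left _ _)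
    zify [h1, hx1]
    ring
  induction l generalizing m with
  | zero => simp [hp, hz]
  | succ l ih =>
    have hpl : p k (l + 1) = p k l * (2 * b (k + l + 1)) := by
      rw [hp, hp, Finset.prod_Icc_succ_top (by omega)]
      rfl
    have : k + (l + 1) = (k + l) + 1 := by ring
    rw [this, step (k + l) m, ih (m * (2 * b (k + l + 1))), hpl]
    ring_nf
end

section
/- Let g be a power of 2 and define z(i) = i + ∑_{j=1}^{i} ω(j) (i.e. z_0 with a_0 = 1). Then for every n ∈ ℕ, z((n+1)g) − z(ng) ≥ z(g); explicitly, z((n+1)g) − z(ng) = g + ω(n+1) + ω(g) + ∑_{i=1}^{g−1} ω(i) ≥ z(g). -/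
lemma aux_val_add (e n i : ℕ) (hi0 : 0 < i) (hie : i < 2 ^ e) :
    padicValNat 2 (n * 2 ^ e + i) = padicValNat 2 i := by
  haveI : Fact (Nat.Prime 2) := ⟨Nat.prime_two⟩
  set k := padicValNat 2 i with hk
  have hdvd : (2 : ℕ) ^ k ∣ i := pow_padicValNat_dvd
  have hndvd : ¬ (2 : ℕ) ^ (k + 1) ∣ i := pow_succ_padicValNat_not_dvd hi0.ne'
  have hke : k < e := by
    by_contra h
    push_neg at h
    exact absurd (Nat.le_of_dvd hi0 hdvd)
      (not_le.mpr (lt_of_lt_of_le hie (Nat.pow_le_pow_right (by norm_num) h)))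
  have hm0 : n * 2 ^ e + i ≠ 0 := by positivity
  have h1 : (2 : ℕ) ^ k ∣ n * 2 ^ e + i :=
    Dvd.dvd.add (Dvd.dvd.mul_left (pow_dvd_pow 2 hke.le) n) hdvd
  have h2 : ¬ (2 : ℕ) ^ (k + 1) ∣ n * 2 ^ e + i := by
    intro h
    exact hndvd ((Nat.dvd_add_right (Dvd.dvd.mul_left (pow_dvd_pow 2 hke) n)).mp h)
  have hle : k ≤ padicValNat 2 (n * 2 ^ e + i) := (padicValNat_dvd_iff_le hm0).mp h1
  have hge : padicValNat 2 (n * 2 ^ e + i) ≤ k := by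
    by_contra h
    exact h2 ((padicValNat_dvd_iff_le hm0).mpr (not_le.mp h))
  exact le_antisymm hge hle

theorem stmt_10 (g : ℕ) (hg : ∃ e : ℕ, g = 2 ^ e)
    (z : ℕ → ℕ)
    (hz : ∀ i, z i = i + ∑ j ∈ Finset.Icc 1 i, padicValNat 2 j)
    (n : ℕ) :
    z ((n + 1) * g) - z (n * g)
      = g + padicValNat 2 (n + 1) + padicValNat 2 g
          + ∑ i ∈ Finset.Icc 1 (g - 1), padicValNat 2 i ∧
    z g ≤ z ((n + 1) * g) - z (n * g) := by
  obtain ⟨e, rfl⟩ := hg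
  set g := 2 ^ e with hgdef
  have hg0 : 0 < g := Nat.pow_pos (by norm_num)
  -- sum over the block Ioc (n*g) ((n+1)*g)
  have hblock : ∑ j ∈ Finset.Ioc (n * g) ((n + 1) * g), padicValNat 2 j
      = padicValNat 2 (n + 1) + padicValNat 2 g
          + ∑ i ∈ Finset.Icc 1 (g - 1), padicValNat 2 i := by
    have h1 : Finset.Ioc (n * g) ((n + 1) * g)
        = Finset.map ⟨fun i => n * g + i, add_right_injective (n * g)⟩ (Finset.Ioc 0 g) := by
      ext x
      simp only [Finset.mem_Ioc, Finset.mem_map, Function.Embedding.coeFn_mk]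
      have hng : (n + 1) * g = n * g + g := by ring
      constructor
      · intro ⟨h1, h2⟩
        exact ⟨x - n * g, by constructor <;> omega⟩
      · rintro ⟨a, ⟨ha1, ha2⟩, rfl⟩
        constructor <;> nlinarith
    rw [h1, Finset.sum_map]
    simp only [Function.Embedding.coeFn_mk]
    have h2 : Finset.Ioc 0 g = insert g (Finset.Icc 1 (g - 1)) := by
      ext x; simp only [Finset.mem_Ioc, Finset.mem_insert, Finset.mem_Icc]; omega
    rw [h2, Finset.sum_insert (by simp; omega)]
    have htop : n * g + g = (n + 1) * g := by ring
    have hval_top : padicValNat 2 (n * g + g) = padicValNat 2 (n + 1) + padicValNat 2 g := by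
      rw [htop, padicValNat.mul (by omega) hg0.ne']
    rw [hval_top]
    congr 1
    apply Finset.sum_congr rfl
    intro i hi
    simp only [Finset.mem_Icc] at hi
    exact aux_val_add e n i (by omega) (by omega)
  have key : z ((n + 1) * g) = z (n * g) + (g + (padicValNat 2 (n + 1) + padicValNat 2 g
      + ∑ i ∈ Finset.Icc 1 (g - 1), padicValNat 2 i)) := by
    rw [hz, hz]
    have hIcc : ∀ m : ℕ, Finset.Icc 1 m = Finset.Ioc 0 m := by
      intro m; ext x; simp only [Finset.mem_Icc, Finset.mem_Ioc]; omega
    rw [hIcc ((n + 1) * g), hIcc (n * g),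
      ← Finset.sum_Ioc_consecutive _ (Nat.zero_le (n * g))
        (by nlinarith : n * g ≤ (n + 1) * g), hblock]
    ring
  constructor
  · omega
  · have hzg : z g = g + ∑ i ∈ Finset.Icc 1 (g - 1), padicValNat 2 i + padicValNat 2 g := by
      rw [hz]
      have h2 : Finset.Icc 1 g = insert g (Finset.Icc 1 (g - 1)) := by
        ext x; simp only [Finset.mem_Icc, Finset.mem_insert]; omega
      rw [h2, Finset.sum_insert (by simp; omega)]
      ring
    omega
end

section
/- For every word u ∈ 𝒜_{k+1}, the second half u⟨(a_{k+1}−1)/2, a_{k+1}−1⟩ is the letterwise negation of the first half u⟨0, (a_{k+1}−1)/2⟩; in particular, for any position i < (a_{k+1}−1)/2 with u_i ∈ {1,2}, one has u_{i + (a_{k+1}−1)/2} = (u_i)'. -/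
/-- letterwise negation: swaps 1 and 2, fixes everything else (in particular 0). -/
def negL (x : ℕ) : ℕ := if x = 1 then 2 else if x = 2 then 1 else x

/-- the lengths a_k : a_0 = 1, a_{k+1} = 2 b_{k+1} a_k + 2 b_{k+1} - 1. -/
def aseq (b : ℕ → ℕ) : ℕ → ℕ
  | 0 => 1
  | k + 1 => 2 * b (k + 1) * aseq b k + 2 * b (k + 1) - 1

/-- the inductive families of words 𝒜_k over the alphabet {0,1,2} (coded in ℕ). -/
def Acal (b : ℕ → ℕ) : ℕ → Set (List ℕ)
  | 0 => {[1], [2]}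
  | k + 1 =>
      { w : List ℕ | ∃ u : ℕ → List ℕ, (∀ i, u i ∈ Acal b k) ∧
          w = (List.flatten ((List.range (b (k + 1))).map fun i =>
                  u (i + 1) ++ List.replicate (padicValNat 2 (i + 1)) 0))
              ++ (List.flatten ((List.range (b (k + 1))).map fun i =>
                  (u (i + 1)).map negL
                    ++ List.replicate (padicValNat 2 (b (k + 1) + i + 1)) 0)) }

lemma val2_add_pow {e j : ℕ} (hj : 0 < j) (hje : j < 2 ^ e) :
    padicValNat 2 (2 ^ e + j) = padicValNat 2 j := by
  set v := padicValNat 2 j with hv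
  have h2v : (2 : ℕ) ^ v ∣ j := pow_padicValNat_dvd
  have hvlt : v < e := by
    have h1 : (2 : ℕ) ^ v ≤ j := Nat.le_of_dvd hj h2v
    exact (Nat.pow_lt_pow_iff_right (by norm_num)).mp (lt_of_le_of_lt h1 hje)
  obtain ⟨m, hm⟩ := h2v
  have hm0 : m ≠ 0 := by rintro rfl; omega
  have hmodd : ¬ 2 ∣ m := by
    intro hdvd
    have : (2 : ℕ) ^ (v + 1) ∣ j := by
      rw [hm, pow_succ]; exact Nat.mul_dvd_mul dvd_rfl hdvd
    exact pow_succ_padicValNat_not_dvd hj.ne' this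
  have key : 2 ^ e + j = 2 ^ v * (2 ^ (e - v) + m) := by
    rw [hm, Nat.mul_add, ← pow_add]
    congr 2
    omega
  have hodd : padicValNat 2 (2 ^ (e - v) + m) = 0 := by
    apply padicValNat.eq_zero_of_not_dvd
    intro hdvd
    have h1 : (2 : ℕ) ∣ 2 ^ (e - v) := dvd_pow_self 2 (by omega)
    exact hmodd ((Nat.dvd_add_right h1).mp hdvd)
  rw [key, padicValNat.mul (by positivity) (by positivity), padicValNat.prime_pow, hodd]
  omega

lemma sum_val2 : ∀ e : ℕ, ∑ i ∈ Finset.range (2 ^ e), padicValNat 2 (i + 1) = 2 ^ e - 1 := by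
  intro e
  induction e with
  | zero => simp
  | succ e ih =>
    have hpos : 0 < 2 ^ e := Nat.pow_pos (by norm_num)
    obtain ⟨m, hm⟩ : ∃ m, 2 ^ e = m + 1 := ⟨2 ^ e - 1, by omega⟩
    have hsplit : (2 : ℕ) ^ (e + 1) = 2 ^ e + 2 ^ e := by ring
    rw [hsplit, Finset.sum_range_add, ih]
    have hterm : ∀ i ∈ Finset.range m, padicValNat 2 (2 ^ e + (i + 1)) = padicValNat 2 (i + 1) :=
      fun i hi => val2_add_pow (by omega) (by rw [Finset.mem_range] at hi; omega)
    have hmsum : ∑ i ∈ Finset.range m, padicValNat 2 (i + 1) + padicValNat 2 (m + 1)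
        = 2 ^ e - 1 := by rw [← Finset.sum_range_succ, ← hm, ih]
    have hm1 : padicValNat 2 (m + 1) = e := by rw [← hm]; exact padicValNat.prime_pow e
    have h2 : ∑ i ∈ Finset.range (2 ^ e), padicValNat 2 (2 ^ e + i + 1) = 2 ^ e := by
      rw [show Finset.range (2 ^ e) = Finset.range (m + 1) by rw [hm], Finset.sum_range_succ]
      have hlastval : padicValNat 2 (2 ^ e + m + 1) = e + 1 := by
        have h3 : 2 ^ e + m + 1 = 2 ^ (e + 1) := by omega
        rw [h3]; exact padicValNat.prime_pow _
      have h4 : ∀ i ∈ Finset.range m,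
          padicValNat 2 (2 ^ e + i + 1) = padicValNat 2 (i + 1) := by
        intro i hi
        rw [show 2 ^ e + i + 1 = 2 ^ e + (i + 1) by omega]
        exact hterm i hi
      rw [Finset.sum_congr rfl h4, hlastval]
      omega
    rw [h2]
    omega

lemma sum_val2_shift (e : ℕ) :
    ∑ i ∈ Finset.range (2 ^ e), padicValNat 2 (2 ^ e + i + 1) = 2 ^ e := by
  have hpos : 0 < 2 ^ e := Nat.pow_pos (by norm_num)
  obtain ⟨m, hm⟩ : ∃ m, 2 ^ e = m + 1 := ⟨2 ^ e - 1, by omega⟩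
  have ih := sum_val2 e
  have hmsum : ∑ i ∈ Finset.range m, padicValNat 2 (i + 1) + padicValNat 2 (m + 1)
      = 2 ^ e - 1 := by rw [← Finset.sum_range_succ, ← hm, ih]
  have hm1 : padicValNat 2 (m + 1) = e := by rw [← hm]; exact padicValNat.prime_pow e
  rw [show Finset.range (2 ^ e) = Finset.range (m + 1) by rw [hm], Finset.sum_range_succ]
  have hlastval : padicValNat 2 (2 ^ e + m + 1) = e + 1 := by
    have h3 : 2 ^ e + m + 1 = 2 ^ (e + 1) := by omega
    rw [h3]; exact padicValNat.prime_pow _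
  have h4 : ∀ i ∈ Finset.range m,
      padicValNat 2 (2 ^ e + i + 1) = padicValNat 2 (i + 1) := by
    intro i hi
    rw [show 2 ^ e + i + 1 = 2 ^ e + (i + 1) by omega]
    exact val2_add_pow (by omega) (by rw [Finset.mem_range] at hi; omega)
  rw [Finset.sum_congr rfl h4, hlastval]
  omega

lemma flat_len (n : ℕ) (g : ℕ → List ℕ) :
    (List.flatten ((List.range n).map g)).length = ∑ i ∈ Finset.range n, (g i).length := by
  rw [List.length_flatten, List.map_map]
  rfl

lemma len_mem (b : ℕ → ℕ) (hb : ∀ n, 1 ≤ n → ∃ e : ℕ, b n = 2 ^ e) :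
    ∀ k u, u ∈ Acal b k → u.length = aseq b k := by
  intro k
  induction k with
  | zero =>
    intro u hu
    simp only [Acal] at hu
    rcases hu with rfl | rfl <;> rfl
  | succ k ih =>
    intro u hu
    obtain ⟨e, he⟩ := hb (k + 1) (by omega)
    obtain ⟨v, hv, rfl⟩ := hu
    have hlen : ∀ i, (v (i + 1)).length = aseq b k := fun i => ih _ (hv (i + 1))
    rw [List.length_append, flat_len, flat_len]
    simp only [List.length_append, List.length_replicate, List.length_map, hlen]
    rw [Finset.sum_add_distrib, Finset.sum_add_distrib, Finset.sum_const, Finset.card_range, smul_eq_mul, he, sum_val2, sum_val2_shift]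
    show 2 ^ e * aseq b k + (2 ^ e - 1) + (2 ^ e * aseq b k + 2 ^ e)
        = 2 * b (k + 1) * aseq b k + 2 * b (k + 1) - 1
    rw [he]
    have hpos : 0 < 2 ^ e := Nat.pow_pos (by norm_num)
    have key : ∀ X n : ℕ, 0 < n → X + (n - 1) + (X + n) = 2 * X + 2 * n - 1 := by
      intros; omega
    rw [key _ _ hpos, mul_assoc]

theorem stmt_15 (b : ℕ → ℕ) (hb : ∀ n, 1 ≤ n → ∃ e : ℕ, b n = 2 ^ e)
    (k : ℕ) (u : List ℕ) (hu : u ∈ Acal b (k + 1)) :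
    ((u.drop ((aseq b (k + 1) - 1) / 2)).take ((aseq b (k + 1) - 1) / 2)
        = (u.take ((aseq b (k + 1) - 1) / 2)).map negL) ∧
    (∀ i, i < (aseq b (k + 1) - 1) / 2 → (u.getD i 0 = 1 ∨ u.getD i 0 = 2) →
        u.getD (i + (aseq b (k + 1) - 1) / 2) 0 = negL (u.getD i 0)) := by
  have hulen : u.length = aseq b (k + 1) := len_mem b hb (k + 1) u hu
  obtain ⟨e, he⟩ := hb (k + 1) (by omega)
  obtain ⟨v, hv, rfl⟩ := hu
  have hlen : ∀ i, (v (i + 1)).length = aseq b k := fun i => len_mem b hb k _ (hv (i + 1))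
  have hpos : 0 < 2 ^ e := Nat.pow_pos (by norm_num)
  obtain ⟨m, hm⟩ : ∃ m, 2 ^ e = m + 1 := ⟨2 ^ e - 1, by omega⟩
  set A := aseq b k with hA
  set h := (aseq b (k + 1) - 1) / 2 with hh
  set W1 := List.flatten ((List.range (b (k + 1))).map fun i =>
      v (i + 1) ++ List.replicate (padicValNat 2 (i + 1)) 0) with hW1def
  set W2 := List.flatten ((List.range (b (k + 1))).map fun i =>
      (v (i + 1)).map negL ++ List.replicate (padicValNat 2 (b (k + 1) + i + 1)) 0) with hW2def
  have haseq : aseq b (k + 1) = 2 * (2 ^ e * A) + 2 * 2 ^ e - 1 := by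
    show 2 * b (k + 1) * aseq b k + 2 * b (k + 1) - 1 = _
    rw [he, ← hA, mul_assoc]
  have hhval : h = 2 ^ e * A + (2 ^ e - 1) := by
    rw [hh, haseq]
    generalize 2 ^ e * A = X
    omega
  have hW1len : W1.length = h := by
    rw [hW1def, flat_len]
    simp only [List.length_append, List.length_replicate, hlen]
    rw [Finset.sum_add_distrib, Finset.sum_const, Finset.card_range, smul_eq_mul, he, sum_val2,
      hhval]
  have hkey : W2 = W1.map negL ++ [0] := by
    rw [hW1def, hW2def, List.map_flatten, List.map_map]
    rw [he, show List.range (2 ^ e) = List.range m ++ [m] by rw [hm, List.range_succ]]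
    rw [List.map_append, List.map_append, List.flatten_append, List.flatten_append,
      List.append_assoc]
    congr 1
    · congr 1
      apply List.map_congr_left
      intro i hi
      rw [List.mem_range] at hi
      simp only [Function.comp, List.map_append, List.map_replicate]
      have h0 : negL 0 = 0 := rfl
      rw [h0, show 2 ^ e + i + 1 = 2 ^ e + (i + 1) by omega,
        val2_add_pow (by omega) (by omega)]
    · simp only [List.map_cons, List.map_nil, List.flatten_cons, List.flatten_nil,
        List.append_nil, Function.comp, List.map_append, List.map_replicate]
      have h0 : negL 0 = 0 := rfl
      have hv1 : padicValNat 2 (m + 1) = e := by rw [← hm]; exact padicValNat.prime_pow e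
      have hv2 : padicValNat 2 (2 ^ e + m + 1) = e + 1 := by
        rw [show 2 ^ e + m + 1 = 2 ^ (e + 1) by omega]; exact padicValNat.prime_pow _
      rw [h0, hv1, hv2, List.replicate_succ', ← List.append_assoc]
  have htake : (W1 ++ W2).take h = W1 := List.take_left' hW1len
  have hdrop : (W1 ++ W2).drop h = List.map negL W1 ++ [0] := by
    rw [List.drop_left' hW1len, hkey]
  have hmaplen : (List.map negL W1).length = h := by rw [List.length_map, hW1len]
  have hfst : List.take h (List.drop h (W1 ++ W2)) = List.map negL (List.take h (W1 ++ W2)) := by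
    rw [htake, hdrop, List.take_left' hmaplen]
  refine ⟨hfst, ?_⟩
  intro i hi _
  have hlen2h : (W1 ++ W2).length = 2 * h + 1 := by
    rw [hulen, haseq, hhval]
    generalize 2 ^ e * A = X
    omega
  have h1 : i < (W1 ++ W2).length := by omega
  have h2 : i + h < (W1 ++ W2).length := by omega
  rw [List.getD_eq_getElem _ 0 h1, List.getD_eq_getElem _ 0 h2]
  have hd1 : i < ((W1 ++ W2).drop h).length := by rw [List.length_drop]; omega
  have hd2 : i < (((W1 ++ W2).drop h).take h).length := by
    rw [List.length_take]; omega
  have step1 : (W1 ++ W2)[i + h]'h2 = ((W1 ++ W2).drop h)[i]'hd1 := by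
    rw [List.getElem_drop]
    congr 1
    omega
  have step2 : ((W1 ++ W2).drop h)[i]'hd1 = (((W1 ++ W2).drop h).take h)[i]'hd2 := by
    rw [List.getElem_take]
  have hm2 : i < ((List.take h (W1 ++ W2)).map negL).length := by
    rw [List.length_map, List.length_take]; omega
  have step3 : (((W1 ++ W2).drop h).take h)[i]'hd2
      = ((List.take h (W1 ++ W2)).map negL)[i]'hm2 := by
    simp only [hfst]
  have ht1 : i < (List.take h (W1 ++ W2)).length := by rw [List.length_take]; omega
  have step4 : ((List.take h (W1 ++ W2)).map negL)[i]'hm2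
      = negL ((List.take h (W1 ++ W2))[i]'ht1) := List.getElem_map ..
  have step5 : (List.take h (W1 ++ W2))[i]'ht1 = (W1 ++ W2)[i]'h1 := List.getElem_take ..
  rw [step1, step2, step3, step4, step5]
end

section
/- The topological entropy of the subshift generated by the language ℒ = ℒ(⋃_k 𝒜_k) is zero: the number of words of length a_k in ℒ is at most 2·a_k²·(#𝒜_k)², and consequently lim_{k→∞} (log #{words of length a_k in ℒ})/a_k = 0. -/
/-- the language generated by ⋃_k 𝒜_k : all finite subwords (infixes)
    of words from some 𝒜_k. -/
def Lang (b : ℕ → ℕ) : Set (List ℕ) :=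
  {v : List ℕ | ∃ k : ℕ, ∃ u ∈ Acal b k, v <:+: u}

lemma negL_negL (x : ℕ) : negL (negL x) = x := by
  unfold negL; split_ifs <;> omega

lemma negL_zero : negL 0 = 0 := rfl

lemma map_negL_negL (l : List ℕ) : (l.map negL).map negL = l := by
  rw [List.map_map]
  conv_rhs => rw [← List.map_id l]
  exact List.map_congr_left fun a _ => negL_negL a

lemma sum_padic (n : ℕ) :
    ∑ i ∈ Finset.range n, padicValNat 2 (i + 1) = padicValNat 2 n.factorial := by
  haveI : Fact (Nat.Prime 2) := ⟨Nat.prime_two⟩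
  induction n with
  | zero => simp
  | succ n ih =>
      rw [Finset.sum_range_succ, ih, Nat.factorial_succ,
        padicValNat.mul (Nat.succ_ne_zero n) (Nat.factorial_ne_zero n)]
      simp [Nat.succ_eq_add_one]
      omega

lemma padic_two_pow (t : ℕ) : padicValNat 2 (2 ^ t).factorial = 2 ^ t - 1 := by
  haveI : Fact (Nat.Prime 2) := ⟨Nat.prime_two⟩
  induction t with
  | zero => simp
  | succ t ih =>
      have h := padicValNat_factorial_mul (p := 2) (2 ^ t)
      have h2 : (2:ℕ) ^ (t+1) = 2 * 2 ^ t := by ring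
      have hp : 1 ≤ (2:ℕ) ^ t := Nat.one_le_two_pow
      rw [h2, h, ih]
      omega

lemma Acal_neg (b : ℕ → ℕ) : ∀ k w, w ∈ Acal b k → w.map negL ∈ Acal b k := by
  intro k
  induction k with
  | zero =>
      intro w hw
      rcases hw with h | h <;> subst h
      · right; rfl
      · left; rfl
  | succ k ih =>
      rintro w ⟨u, hu, rfl⟩
      refine ⟨fun i => (u i).map negL, fun i => ih _ (hu i), ?_⟩
      simp only [List.map_append, List.map_flatten, List.map_map]
      congr 1 <;>
      · congr 1
        apply List.map_congr_left
        intro i _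
        simp [Function.comp, List.map_replicate, negL_zero, map_negL_negL]

lemma Acal_nonempty (b : ℕ → ℕ) : ∀ k, (Acal b k).Nonempty := by
  intro k
  induction k with
  | zero => exact ⟨[1], Or.inl rfl⟩
  | succ k ih =>
      obtain ⟨w, hw⟩ := ih
      exact ⟨_, ⟨fun _ => w, fun _ => hw, rfl⟩⟩
-- assumes part1 content prepended
lemma aseq_pos (b : ℕ → ℕ) (hb : ∀ n, 1 ≤ n → ∃ e : ℕ, b n = 2 ^ e) (k : ℕ) :
    1 ≤ aseq b k := by
  induction k with
  | zero => exact le_rfl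
  | succ k ih =>
      obtain ⟨e, he⟩ := hb (k + 1) (by omega)
      have : 1 ≤ b (k + 1) := by rw [he]; exact Nat.one_le_two_pow
      have h3 : 1 ≤ 2 * b (k + 1) * aseq b k :=
        Nat.one_le_iff_ne_zero.mpr (by positivity)
      show 1 ≤ 2 * b (k + 1) * aseq b k + 2 * b (k + 1) - 1
      omega

lemma aseq_lt_succ (b : ℕ → ℕ) (hb : ∀ n, 1 ≤ n → ∃ e : ℕ, b n = 2 ^ e) (k : ℕ) :
    aseq b k < aseq b (k + 1) := by
  obtain ⟨e, he⟩ := hb (k + 1) (by omega)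
  have h1 : 1 ≤ b (k + 1) := by rw [he]; exact Nat.one_le_two_pow
  have h2 : 1 ≤ aseq b k := aseq_pos b hb k
  have h3 : aseq b k ≤ b (k + 1) * aseq b k := Nat.le_mul_of_pos_left _ h1
  have h4 : 2 * b (k + 1) * aseq b k = 2 * (b (k + 1) * aseq b k) := by ring
  show aseq b k < 2 * b (k + 1) * aseq b k + 2 * b (k + 1) - 1
  omega

lemma aseq_mono (b : ℕ → ℕ) (hb : ∀ n, 1 ≤ n → ∃ e : ℕ, b n = 2 ^ e) {k m : ℕ}
    (h : k ≤ m) : aseq b k ≤ aseq b m := by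
  induction m with
  | zero => have : k = 0 := by omega
            subst this; exact le_rfl
  | succ m ih =>
      rcases Nat.lt_or_ge k (m + 1) with h' | h'
      · exact le_trans (ih (by omega)) (aseq_lt_succ b hb m).le
      · have : k = m + 1 := by omega
        subst this; exact le_rfl

lemma aseq_strict (b : ℕ → ℕ) (hb : ∀ n, 1 ≤ n → ∃ e : ℕ, b n = 2 ^ e) {k m : ℕ}
    (h : k < m) : aseq b k < aseq b m :=
  lt_of_lt_of_le (aseq_lt_succ b hb k) (aseq_mono b hb h)

lemma Acal_length (b : ℕ → ℕ) (hb : ∀ n, 1 ≤ n → ∃ e : ℕ, b n = 2 ^ e) :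
    ∀ k w, w ∈ Acal b k → w.length = aseq b k := by
  intro k
  induction k with
  | zero =>
      intro w hw
      rcases hw with h | h <;> subst h <;> rfl
  | succ k ih =>
      rintro w ⟨u, hu, rfl⟩
      obtain ⟨e, he⟩ := hb (k + 1) (by omega)
      have hsum : ∀ (f : ℕ → List ℕ) (n : ℕ),
          (List.flatten ((List.range n).map f)).length
            = ∑ i ∈ Finset.range n, (f i).length := by
        intro f n
        induction n with
        | zero => simp
        | succ n ihn => simp [List.range_succ, ihn, Finset.sum_range_succ]
      rw [List.length_append, hsum, hsum]
      have hlen : ∀ i, (u (i + 1)).length = aseq b k := fun i => ih _ (hu (i+1))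
      have e1 : ∑ i ∈ Finset.range (b (k+1)),
          (u (i+1) ++ List.replicate (padicValNat 2 (i + 1)) 0).length
          = b (k+1) * aseq b k + ∑ i ∈ Finset.range (b (k+1)), padicValNat 2 (i+1) := by
        simp [List.length_append, hlen, Finset.sum_add_distrib, Finset.sum_const,
          Finset.card_range, Nat.mul_comm]
      have e2 : ∑ i ∈ Finset.range (b (k+1)),
          ((u (i+1)).map negL ++ List.replicate (padicValNat 2 (b (k+1) + i + 1)) 0).length
          = b (k+1) * aseq b k
            + ∑ i ∈ Finset.range (b (k+1)), padicValNat 2 (b (k+1) + i + 1) := by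
        simp [List.length_append, hlen, Finset.sum_add_distrib, Finset.sum_const,
          Finset.card_range, Nat.mul_comm]
      rw [e1, e2]
      have e3 : (∑ i ∈ Finset.range (b (k+1)), padicValNat 2 (i+1))
          + ∑ i ∈ Finset.range (b (k+1)), padicValNat 2 (b (k+1) + i + 1)
          = ∑ i ∈ Finset.range (b (k+1) + b (k+1)), padicValNat 2 (i+1) := by
        rw [Finset.sum_range_add]
      have e4 : ∑ i ∈ Finset.range (b (k+1) + b (k+1)), padicValNat 2 (i+1)
          = 2 * b (k+1) - 1 := by
        rw [sum_padic]
        have : b (k+1) + b (k+1) = 2 ^ (e + 1) := by rw [he]; ring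
        rw [this, padic_two_pow, he]
        ring_nf
      have hb1 : 1 ≤ b (k+1) := by rw [he]; exact Nat.one_le_two_pow
      have e5 : b (k+1) * aseq b k + b (k+1) * aseq b k
          = 2 * b (k+1) * aseq b k := by ring
      show _ = 2 * b (k + 1) * aseq b k + 2 * b (k + 1) - 1
      omega
lemma slice_infix (w : List ℕ) (n m : ℕ) : (w.drop n).take m <:+: w :=
  List.infix_iff_prefix_suffix.mpr ⟨w.drop n, List.take_prefix _ _, List.drop_suffix _ _⟩

lemma infix_slice {v w : List ℕ} (h : v <:+: w) :
    ∃ n, n + v.length ≤ w.length ∧ v = (w.drop n).take v.length := by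
  obtain ⟨s, t, rfl⟩ := h
  refine ⟨s.length, by simp, ?_⟩
  rw [List.append_assoc, List.drop_left, List.take_left]

lemma slice_form (c c' : List ℕ) (p n ℓ : ℕ) :
    ((c ++ (List.replicate p 0 ++ c')).drop n).take ℓ =
      (c.drop n).take ℓ ++
        (List.replicate (min (ℓ - (c.length - n)) (p - (n - c.length))) 0 ++
          (c'.drop (n - c.length - p)).take (ℓ - (c.length - n) - (p - (n - c.length)))) := by
  rw [List.drop_append, List.drop_append,
    List.drop_replicate, List.length_replicate,
    List.take_append, List.take_append,
    List.take_replicate, List.length_replicate, List.length_drop]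

lemma base_step {ℓ p : ℕ} {c c' v : List ℕ} (hc : c.length = ℓ) (hc' : c'.length = ℓ)
    (hv : v.length = ℓ)
    (h : v <:+: c ++ (List.replicate p 0 ++ c')) :
    ∃ i ≤ ℓ, v <:+: c ++ (List.replicate i 0 ++ c') := by
  by_cases hp : p ≤ ℓ
  · exact ⟨p, hp, h⟩
  push_neg at hp
  obtain ⟨n, hn, hv'⟩ := infix_slice h
  rw [List.length_append, List.length_append, List.length_replicate, hc, hc', hv] at hn
  rw [hv] at hv'
  have key : ∀ n' : ℕ,
      ((c ++ (List.replicate p 0 ++ c')).drop n).take ℓ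
        = ((c ++ (List.replicate ℓ 0 ++ c')).drop n').take ℓ →
      ∃ i ≤ ℓ, v <:+: c ++ (List.replicate i 0 ++ c') := by
    intro n' he
    refine ⟨ℓ, le_rfl, ?_⟩
    rw [hv', he]
    exact slice_infix _ _ _
  rcases Nat.lt_or_ge n ℓ with h1 | h1
  · apply key n
    rw [slice_form, slice_form, hc]
    rw [show ℓ - (ℓ - n) - (p - (n - ℓ)) = 0 by omega,
      show ℓ - (ℓ - n) - (ℓ - (n - ℓ)) = 0 by omega,
      show min (ℓ - (ℓ - n)) (p - (n - ℓ)) = min (ℓ - (ℓ - n)) (ℓ - (n - ℓ)) by omega]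
    simp
  rcases Nat.lt_or_ge p n with h2 | h2
  · -- v starts after the zero block begins and touches c' : n > p (and n ≥ ℓ)
    apply key (n - p + ℓ)
    rw [slice_form, slice_form, hc]
    rw [List.drop_eq_nil_of_le (show c.length ≤ n by omega),
      List.drop_eq_nil_of_le (show c.length ≤ n - p + ℓ by omega),
      show n - ℓ - p = n - p + ℓ - ℓ - ℓ by omega,
      show ℓ - (ℓ - n) - (p - (n - ℓ)) = ℓ - (ℓ - (n - p + ℓ)) - (ℓ - (n - p + ℓ - ℓ)) by omega,
      show min (ℓ - (ℓ - n)) (p - (n - ℓ))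
        = min (ℓ - (ℓ - (n - p + ℓ))) (ℓ - (n - p + ℓ - ℓ)) by omega]
  · -- ℓ ≤ n ≤ p : v is all zeros
    apply key ℓ
    rw [slice_form, slice_form, hc]
    rw [List.drop_eq_nil_of_le (show c.length ≤ n by omega),
      List.drop_eq_nil_of_le (show c.length ≤ ℓ by omega),
      show ℓ - (ℓ - n) - (p - (n - ℓ)) = 0 by omega,
      show ℓ - (ℓ - ℓ) - (ℓ - (ℓ - ℓ)) = 0 by omega,
      show min (ℓ - (ℓ - n)) (p - (n - ℓ)) = min (ℓ - (ℓ - ℓ)) (ℓ - (ℓ - ℓ)) by omega]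
    simp

lemma infix_split {v x y : List ℕ} (m : ℕ) (hm : x.length + v.length ≤ m)
    (h : v <:+: x ++ y) : v <:+: y ∨ v <:+: (x ++ y).take m := by
  obtain ⟨s, t, e⟩ := h
  by_cases hs : x.length ≤ s.length
  · left
    have h2 : s <+: x ++ y := ⟨v ++ t, by rw [← List.append_assoc, e]⟩
    have hxs : x <+: s :=
      List.prefix_of_prefix_length_le (List.prefix_append x y) h2 hs
    obtain ⟨s', rfl⟩ := hxs
    refine ⟨s', t, ?_⟩
    simp only [List.append_assoc] at e ⊢
    exact List.append_cancel_left e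
  · right
    push_neg at hs
    refine ⟨s, t.take (m - s.length - v.length), ?_⟩
    rw [← e, List.take_append,
      List.take_of_length_le (show (s ++ v).length ≤ m by simp; omega)]
    rw [List.length_append]
    congr 2
    omega
lemma chain_step : ∀ (L : List (List ℕ × ℕ)) (v : List ℕ), v ≠ [] →
    (∀ p ∈ L, v.length ≤ p.1.length) →
    v <:+: (L.map fun p => p.1 ++ List.replicate p.2 0).flatten →
    ∃ d q d', ((d, q) ∈ L) ∧ (∃ q', (d', q') ∈ L) ∧
      v <:+: d ++ (List.replicate q 0 ++ d') := by
  intro L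
  induction L with
  | nil =>
      intro v hv _ hinf
      simp only [List.map_nil, List.flatten_nil, List.infix_nil] at hinf
      exact absurd hinf hv
  | cons a L ih =>
      obtain ⟨d, q⟩ := a
      intro v hv hlen hinf
      rcases L with _ | ⟨⟨d2, q2⟩, rest⟩
      · -- singleton
        simp only [List.map_cons, List.map_nil, List.flatten_cons, List.flatten_nil,
          List.append_nil] at hinf
        refine ⟨d, q, d, List.mem_cons_self, ⟨q, List.mem_cons_self⟩, ?_⟩
        refine hinf.trans (List.IsPrefix.isInfix ?_)
        rw [← List.append_assoc]
        exact List.prefix_append _ _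
      · -- at least two blocks
        simp only [List.map_cons, List.flatten_cons] at hinf
        have hinf' : v <:+: (d ++ List.replicate q 0) ++
            (List.map (fun p => p.1 ++ List.replicate p.2 0) ((d2, q2) :: rest)).flatten :=
          hinf
        have hd2 : v.length ≤ d2.length := hlen (d2, q2) (by simp)
        rcases infix_split ((d ++ List.replicate q 0).length + d2.length)
            (by omega) hinf' with hcase | hcase
        · obtain ⟨e, r, e', he, ⟨r', he'⟩, hres⟩ :=
            ih v hv (fun p hp => hlen p (List.mem_cons_of_mem _ hp)) hcase
          exact ⟨e, r, e', List.mem_cons_of_mem _ he,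
            ⟨r', List.mem_cons_of_mem _ he'⟩, hres⟩
        · refine ⟨d, q, d2, List.mem_cons_self,
            ⟨q2, List.mem_cons_of_mem _ (List.mem_cons_self)⟩, ?_⟩
          have heq : ((d ++ List.replicate q 0) ++
              (List.map (fun p : List ℕ × ℕ => p.1 ++ List.replicate p.2 0)
                ((d2, q2) :: rest)).flatten).take
                ((d ++ List.replicate q 0).length + d2.length)
              = d ++ (List.replicate q 0 ++ d2) := by
            rw [List.take_length_add_append]
            simp only [List.map_cons, List.flatten_cons]
            rw [List.append_assoc d2, List.take_left' rfl, List.append_assoc]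
          rw [heq] at hcase
          exact hcase
lemma blocks_spec (b : ℕ → ℕ) (hb1 : 1 ≤ b (k + 1)) {w : List ℕ}
    (hw : w ∈ Acal b (k + 1)) :
    ∃ L : List (List ℕ × ℕ), L ≠ [] ∧ (∀ p ∈ L, p.1 ∈ Acal b k) ∧
      w = (L.map fun p => p.1 ++ List.replicate p.2 0).flatten := by
  obtain ⟨u, hu, rfl⟩ := hw
  refine ⟨((List.range (b (k+1))).map fun i => (u (i+1), padicValNat 2 (i+1))) ++
    ((List.range (b (k+1))).map fun i =>
      ((u (i+1)).map negL, padicValNat 2 (b (k+1) + i + 1))), ?_, ?_, ?_⟩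
  · simp only [ne_eq, List.append_eq_nil_iff, not_and]
    intro h
    have := congrArg List.length h
    simp at this
    omega
  · intro p hp
    rcases List.mem_append.mp hp with h | h <;>
      obtain ⟨i, _, rfl⟩ := List.mem_map.mp h
    · exact hu (i + 1)
    · exact Acal_neg b k _ (hu (i + 1))
  · rw [List.map_append, List.flatten_append, List.map_map, List.map_map]
    rfl

lemma struct (b : ℕ → ℕ) (hb : ∀ n, 1 ≤ n → ∃ e : ℕ, b n = 2 ^ e) (k : ℕ) :
    ∀ m (v c c' : List ℕ) (p : ℕ), v.length = aseq b k →
      c ∈ Acal b (k + m) → c' ∈ Acal b (k + m) →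
      v <:+: c ++ (List.replicate p 0 ++ c') →
      ∃ u ∈ Acal b k, ∃ w ∈ Acal b k, ∃ i ≤ aseq b k,
        v <:+: u ++ (List.replicate i 0 ++ w) := by
  intro m
  induction m with
  | zero =>
      intro v c c' p hv hc hc' hinf
      obtain ⟨i, hi, h⟩ := base_step (Acal_length b hb _ _ hc) (Acal_length b hb _ _ hc')
        hv hinf
      exact ⟨c, hc, c', hc', i, hi, h⟩
  | succ m ih =>
      intro v c c' p hv hc hc' hinf
      have hb1 : 1 ≤ b (k + m + 1) := by
        obtain ⟨e, he⟩ := hb (k + m + 1) (by omega)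
        rw [he]; exact Nat.one_le_two_pow
      obtain ⟨L1, hL1ne, hL1mem, hL1⟩ := blocks_spec b hb1 (show c ∈ Acal b (k + m + 1) from hc)
      obtain ⟨L2, hL2ne, hL2mem, hL2⟩ := blocks_spec b hb1 (show c' ∈ Acal b (k + m + 1) from hc')
      rcases List.eq_nil_or_concat L1 with rfl | ⟨L0, ⟨d, q⟩, rfl⟩
      · exact absurd rfl hL1ne
      set L : List (List ℕ × ℕ) := (L0 ++ [(d, q + p)]) ++ L2 with hL
      have hmem : ∀ x ∈ L, x.1 ∈ Acal b (k + m) := by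
        intro x hx
        rcases List.mem_append.mp hx with h | h
        · rcases List.mem_append.mp h with h' | h'
          · exact hL1mem x (by simp [List.concat_eq_append, h'])
          · simp at h'
            subst h'
            exact hL1mem (d, q) (by simp [List.concat_eq_append])
        · exact hL2mem x h
      have hflat : c ++ (List.replicate p 0 ++ c')
          = (L.map fun p => p.1 ++ List.replicate p.2 0).flatten := by
        rw [hL, hL1, hL2]
        simp only [List.concat_eq_append, List.map_append, List.flatten_append,
          List.map_cons, List.map_nil, List.flatten_cons, List.flatten_nil,
          List.append_nil, List.append_assoc, List.replicate_add]
      have hlenv : ∀ x ∈ L, v.length ≤ x.1.length := by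
        intro x hx
        rw [Acal_length b hb _ _ (hmem x hx), hv]
        exact aseq_mono b hb (by omega)
      have hvne : v ≠ [] := by
        intro h
        have := aseq_pos b hb k
        rw [h] at hv
        simp at hv
        omega
      rw [hflat] at hinf
      obtain ⟨d1, q1, d2, hd1, ⟨q2, hd2⟩, hres⟩ := chain_step L v hvne hlenv hinf
      exact ih v d1 d2 q1 hv (hmem _ hd1) (hmem _ hd2) hres

lemma main_struct (b : ℕ → ℕ) (hb : ∀ n, 1 ≤ n → ∃ e : ℕ, b n = 2 ^ e) {k : ℕ}
    {v : List ℕ} (hvl : v.length = aseq b k) (hv : v ∈ Lang b) :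
    ∃ u ∈ Acal b k, ∃ w ∈ Acal b k, ∃ i ≤ aseq b k,
      v <:+: u ++ (List.replicate i 0 ++ w) := by
  obtain ⟨m, w, hw, hiw⟩ := hv
  rcases Nat.lt_or_ge m k with hmk | hmk
  · have h1 : v.length ≤ w.length := hiw.length_le
    rw [hvl, Acal_length b hb _ _ hw] at h1
    exact absurd h1 (not_le.mpr (aseq_strict b hb hmk))
  · obtain ⟨m', rfl⟩ := Nat.exists_eq_add_of_le hmk
    refine struct b hb k m' v w w 0 hvl hw hw ?_
    simp only [List.replicate_zero, List.nil_append]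
    exact hiw.trans (List.prefix_append w w).isInfix
lemma ncard_prod {α β : Type*} (s : Set α) (t : Set β) :
    (s ×ˢ t).ncard = s.ncard * t.ncard := by
  rw [← Nat.card_coe_set_eq, ← Nat.card_coe_set_eq, ← Nat.card_coe_set_eq,
    Nat.card_congr (Equiv.Set.prod s t), Nat.card_prod]

lemma listset {α : Type*} (s : Set α) (hs : s.Finite) :
    ∀ n : ℕ, {l : List α | l.length = n ∧ ∀ x ∈ l, x ∈ s}.Finite ∧
      {l : List α | l.length = n ∧ ∀ x ∈ l, x ∈ s}.ncard ≤ s.ncard ^ n := by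
  intro n
  induction n with
  | zero =>
      have he : {l : List α | l.length = 0 ∧ ∀ x ∈ l, x ∈ s} = {([] : List α)} := by
        ext l
        simp [List.length_eq_zero_iff]
        rintro rfl
        simp
      rw [he]
      exact ⟨Set.finite_singleton _, by simp⟩
  | succ n ih =>
      have he : {l : List α | l.length = n + 1 ∧ ∀ x ∈ l, x ∈ s}
          = (fun p : α × List α => p.1 :: p.2) ''
            (s ×ˢ {l : List α | l.length = n ∧ ∀ x ∈ l, x ∈ s}) := by
        ext l
        constructor
        · rintro ⟨hlen, hmem⟩
          cases l with
          | nil => simp at hlen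
          | cons a t =>
              exact ⟨(a, t), ⟨hmem a (by simp), by simp at hlen; exact hlen,
                fun x hx => hmem x (by simp [hx])⟩, rfl⟩
        · rintro ⟨⟨a, t⟩, ⟨ha, hlen, hmem⟩, rfl⟩
          refine ⟨by simp [hlen], ?_⟩
          intro x hx
          rcases List.mem_cons.mp hx with rfl | hx
          · exact ha
          · exact hmem x hx
      rw [he]
      have hfin : (s ×ˢ {l : List α | l.length = n ∧ ∀ x ∈ l, x ∈ s}).Finite :=
        hs.prod ih.1
      refine ⟨hfin.image _, ?_⟩
      calc ((fun p : α × List α => p.1 :: p.2) ''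
            (s ×ˢ {l : List α | l.length = n ∧ ∀ x ∈ l, x ∈ s})).ncard
          ≤ (s ×ˢ {l : List α | l.length = n ∧ ∀ x ∈ l, x ∈ s}).ncard :=
            Set.ncard_image_le hfin
        _ = s.ncard * {l : List α | l.length = n ∧ ∀ x ∈ l, x ∈ s}.ncard :=
            ncard_prod _ _
        _ ≤ s.ncard * s.ncard ^ n := Nat.mul_le_mul_left _ ih.2
        _ = s.ncard ^ (n + 1) := by ring

/-- reconstruction function for `Acal (k+1)` from the list of chosen words. -/
def reconstruct (b : ℕ → ℕ) (k : ℕ) (l : List (List ℕ)) : List ℕ :=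
  (List.flatten ((List.range (b (k + 1))).map fun i =>
      l.getD i [] ++ List.replicate (padicValNat 2 (i + 1)) 0))
    ++ (List.flatten ((List.range (b (k + 1))).map fun i =>
      (l.getD i []).map negL ++ List.replicate (padicValNat 2 (b (k + 1) + i + 1)) 0))

lemma Acal_sub_image (b : ℕ → ℕ) (k : ℕ) :
    Acal b (k + 1) ⊆ reconstruct b k ''
      {l : List (List ℕ) | l.length = b (k + 1) ∧ ∀ x ∈ l, x ∈ Acal b k} := by
  rintro w ⟨u, hu, rfl⟩
  refine ⟨(List.range (b (k + 1))).map fun i => u (i + 1), ⟨by simp, ?_⟩, ?_⟩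
  · intro x hx
    obtain ⟨i, _, rfl⟩ := List.mem_map.mp hx
    exact hu (i + 1)
  · have hget : ∀ i ∈ List.range (b (k + 1)),
        ((List.range (b (k + 1))).map fun j => u (j + 1)).getD i [] = u (i + 1) := by
      intro i hi
      rw [List.mem_range] at hi
      rw [List.getD_eq_getElem?_getD, List.getElem?_map, List.getElem?_range hi]
      rfl
    unfold reconstruct
    congr 1
    · congr 1
      apply List.map_congr_left
      intro i hi
      rw [hget i hi]
    · congr 1
      apply List.map_congr_left
      intro i hi
      rw [hget i hi]

lemma Acal_finite (b : ℕ → ℕ) : ∀ k, (Acal b k).Finite := by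
  intro k
  induction k with
  | zero => exact (Set.finite_singleton _).insert _
  | succ k ih =>
      exact Set.Finite.subset (((listset _ ih (b (k+1))).1).image _) (Acal_sub_image b k)

lemma Acal_card (b : ℕ → ℕ) :
    ∀ k, (Acal b k).ncard ≤ 2 ^ ∏ i ∈ Finset.range k, b (i + 1) := by
  intro k
  induction k with
  | zero =>
      have h0 : Acal b 0 = {[1], [2]} := rfl
      rw [h0, Set.ncard_pair (show ([1] : List ℕ) ≠ [2] by simp)]
      simp
  | succ k ih =>
      calc (Acal b (k+1)).ncard
          ≤ (reconstruct b k ''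
              {l : List (List ℕ) | l.length = b (k + 1) ∧ ∀ x ∈ l, x ∈ Acal b k}).ncard :=
            Set.ncard_le_ncard (Acal_sub_image b k)
              (((listset _ (Acal_finite b k) (b (k+1))).1).image _)
        _ ≤ {l : List (List ℕ) | l.length = b (k + 1) ∧ ∀ x ∈ l, x ∈ Acal b k}.ncard :=
            Set.ncard_image_le (listset _ (Acal_finite b k) (b (k+1))).1
        _ ≤ (Acal b k).ncard ^ b (k + 1) := (listset _ (Acal_finite b k) (b (k+1))).2
        _ ≤ (2 ^ ∏ i ∈ Finset.range k, b (i + 1)) ^ b (k + 1) :=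
            Nat.pow_le_pow_left ih _
        _ = 2 ^ ∏ i ∈ Finset.range (k + 1), b (i + 1) := by
            rw [← pow_mul, Finset.prod_range_succ]

lemma Acal_card_pos (b : ℕ → ℕ) (k : ℕ) : 1 ≤ (Acal b k).ncard :=
  (Set.ncard_pos (Acal_finite b k)).mpr (Acal_nonempty b k)
lemma negL_le (x : ℕ) (h : x ≤ 2) : negL x ≤ 2 := by
  unfold negL; split_ifs <;> omega

lemma Acal_mem_le (b : ℕ → ℕ) : ∀ k w, w ∈ Acal b k → ∀ x ∈ w, x ≤ 2 := by
  intro k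
  induction k with
  | zero =>
      intro w hw x hx
      rcases hw with h | h <;> subst h <;> simp at hx <;> omega
  | succ k ih =>
      rintro w ⟨u, hu, rfl⟩ x hx
      rcases List.mem_append.mp hx with h | h <;>
        · obtain ⟨l, hl, hxl⟩ := List.mem_flatten.mp h
          obtain ⟨i, hi, rfl⟩ := List.mem_map.mp hl
          rcases List.mem_append.mp hxl with h' | h'
          first
          | · exact ih _ (hu (i+1)) x h'
            · simp at h'; omega
          | · obtain ⟨y, hy, rfl⟩ := List.mem_map.mp h'
              exact negL_le y (ih _ (hu (i+1)) y hy)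
            · simp at h'; omega

lemma aseq_lower (b : ℕ → ℕ) (hb : ∀ n, 1 ≤ n → ∃ e : ℕ, b n = 2 ^ e) :
    ∀ k, 2 ^ k * ∏ i ∈ Finset.range k, b (i + 1) ≤ aseq b k := by
  intro k
  induction k with
  | zero => simp [aseq]
  | succ k ih =>
      have hb1 : 1 ≤ b (k + 1) := by
        obtain ⟨e, he⟩ := hb (k + 1) (by omega); rw [he]; exact Nat.one_le_two_pow
      have h1 : 2 ^ (k+1) * ∏ i ∈ Finset.range (k+1), b (i + 1)
          = 2 * b (k+1) * (2 ^ k * ∏ i ∈ Finset.range k, b (i + 1)) := by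
        rw [Finset.prod_range_succ]; ring
      have h2 : 2 * b (k+1) * (2 ^ k * ∏ i ∈ Finset.range k, b (i + 1))
          ≤ 2 * b (k+1) * aseq b k := Nat.mul_le_mul_left _ ih
      have h3 : aseq b (k+1) = 2 * b (k+1) * aseq b k + 2 * b (k+1) - 1 := rfl
      omega

lemma ncard_Iic (a : ℕ) : (Set.Iic a).ncard = a + 1 := by
  rw [← Finset.coe_Iic, Set.ncard_coe_finset, Nat.card_Iic]

lemma count_bound (b : ℕ → ℕ) (hb : ∀ n, 1 ≤ n → ∃ e : ℕ, b n = 2 ^ e) (k : ℕ) :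
    {v ∈ Lang b | v.length = aseq b k}.ncard
      ≤ 2 * (aseq b k) ^ 2 * (Acal b k).ncard ^ 2 := by
  set a := aseq b k with ha
  set A := Acal b k with hA
  set S := {v ∈ Lang b | v.length = a} with hS
  set G : List ℕ × List ℕ × ℕ × ℕ → List ℕ :=
    fun x => ((x.1.drop x.2.2.1) ++ (List.replicate x.2.2.2 0 ++ x.2.1)).take a with hG
  set P : Set (List ℕ × List ℕ × ℕ × ℕ) := A ×ˢ A ×ˢ Set.Iic a ×ˢ Set.Iic a with hP
  have hPfin : P.Finite :=
    (Acal_finite b k).prod ((Acal_finite b k).prod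
      ((Set.finite_Iic a).prod (Set.finite_Iic a)))
  have hsub : S ⊆ G '' P := by
    rintro v ⟨hvL, hvlen⟩
    obtain ⟨u, hu, w, hw, i, hi, hinf⟩ := main_struct b hb hvlen hvL
    have hul : u.length = a := Acal_length b hb _ _ hu
    have hwl : w.length = a := Acal_length b hb _ _ hw
    obtain ⟨n, hn, hv⟩ := infix_slice hinf
    rw [hvlen] at hv
    rw [List.length_append, List.length_append, List.length_replicate,
      hul, hwl, hvlen] at hn
    rcases Nat.le_or_le n a with h1 | h1
    · refine ⟨(u, w, n, i), ⟨hu, hw, Set.mem_Iic.mpr h1, Set.mem_Iic.mpr hi⟩, ?_⟩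
      show _ = v
      rw [hv, List.drop_append,
        show n - u.length = 0 by omega, List.drop_zero]
    · refine ⟨(u, w, a, i - (n - a)), ⟨hu, hw, Set.mem_Iic.mpr le_rfl,
        Set.mem_Iic.mpr (show i - (n - a) ≤ a by omega)⟩, ?_⟩
      show G (u, w, a, i - (n - a)) = v
      rw [hv, List.drop_append, List.drop_append,
        List.drop_replicate, List.length_replicate,
        List.drop_eq_nil_of_le (show u.length ≤ n by omega),
        show n - u.length - i = 0 by omega, List.drop_zero, hul]
      simp only [hG]
      rw [List.drop_eq_nil_of_le (le_of_eq hul)]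
  have hcard : S.ncard ≤ A.ncard * (A.ncard * ((a + 1) * (a + 1))) := by
    calc S.ncard ≤ (G '' P).ncard := Set.ncard_le_ncard hsub (hPfin.image _)
      _ ≤ P.ncard := Set.ncard_image_le hPfin
      _ = A.ncard * (A.ncard * ((a + 1) * (a + 1))) := by
          rw [hP, ncard_prod, ncard_prod, ncard_prod, ncard_Iic]
  rcases Nat.eq_zero_or_pos k with rfl | hk
  · -- k = 0
    have hsub0 : S ⊆ {[0], [1], [2]} := by
      rintro v ⟨hvL, hvlen⟩
      have : v.length = 1 := hvlen
      obtain ⟨x, rfl⟩ := List.length_eq_one_iff.mp this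
      obtain ⟨m, w, hw, hinf⟩ := hvL
      have hx : x ≤ 2 := Acal_mem_le b m w hw x (hinf.mem (by simp))
      interval_cases x <;> simp
    have h3 : S.ncard ≤ 3 := by
      refine le_trans (Set.ncard_le_ncard hsub0 (Set.toFinite _)) ?_
      refine le_trans (Set.ncard_insert_le _ _) ?_
      rw [Set.ncard_pair (show ([1] : List ℕ) ≠ [2] by simp)]
    have hN : A.ncard = 2 := by
      have h0 : A = {[1], [2]} := rfl
      rw [h0, Set.ncard_pair (show ([1] : List ℕ) ≠ [2] by simp)]
    have ha1 : a = 1 := rfl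
    rw [hN, ha1]
    omega
  · -- k ≥ 1
    have ha3 : 3 ≤ a := by
      have h1 : aseq b 1 ≤ a := aseq_mono b hb hk
      have hb1 : 1 ≤ b 1 := by
        obtain ⟨e, he⟩ := hb 1 (by omega); rw [he]; exact Nat.one_le_two_pow
      have h2 : aseq b 1 = 2 * b 1 * aseq b 0 + 2 * b 1 - 1 := rfl
      have h0 : aseq b 0 = 1 := rfl
      rw [h0] at h2
      omega
    have hsq : (a + 1) * (a + 1) ≤ 2 * a ^ 2 := by nlinarith
    calc S.ncard ≤ A.ncard * (A.ncard * ((a + 1) * (a + 1))) := hcard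
      _ = ((a + 1) * (a + 1)) * (A.ncard * A.ncard) := by ring
      _ ≤ (2 * a ^ 2) * (A.ncard * A.ncard) := Nat.mul_le_mul_right _ hsq
      _ = 2 * a ^ 2 * A.ncard ^ 2 := by ring
lemma log_nat_nonneg (n : ℕ) : 0 ≤ Real.log n := by
  rcases Nat.eq_zero_or_pos n with rfl | h
  · simp
  · exact Real.log_nonneg (by exact_mod_cast h)

theorem stmt_18 (b : ℕ → ℕ) (hb : ∀ n, 1 ≤ n → ∃ e : ℕ, b n = 2 ^ e) :
    (∀ k : ℕ, {v ∈ Lang b | v.length = aseq b k}.ncard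
        ≤ 2 * (aseq b k) ^ 2 * (Acal b k).ncard ^ 2) ∧
    Filter.Tendsto
      (fun k : ℕ =>
        Real.log ({v ∈ Lang b | v.length = aseq b k}.ncard) / (aseq b k : ℝ))
      Filter.atTop (nhds 0) := by
  refine ⟨count_bound b hb, ?_⟩
  set f : ℕ → ℝ := fun k =>
    Real.log ({v ∈ Lang b | v.length = aseq b k}.ncard) / (aseq b k : ℝ) with hf
  set U : ℕ → ℝ := fun k =>
    Real.log 2 / 2 ^ k + 2 * (Real.log (aseq b k) / aseq b k) + 2 * Real.log 2 / 2 ^ k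
    with hU
  have hb1 : ∀ n, 1 ≤ n → 1 ≤ b n := by
    intro n hn
    obtain ⟨e, he⟩ := hb n hn; rw [he]; exact Nat.one_le_two_pow
  have hP1 : ∀ k, 1 ≤ ∏ i ∈ Finset.range k, b (i + 1) := by
    intro k
    apply Finset.one_le_prod'
    intro i _
    exact hb1 (i + 1) (by omega)
  have ha2k : ∀ k, 2 ^ k ≤ aseq b k := by
    intro k
    calc 2 ^ k = 2 ^ k * 1 := by ring
      _ ≤ 2 ^ k * ∏ i ∈ Finset.range k, b (i + 1) := Nat.mul_le_mul_left _ (hP1 k)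
      _ ≤ aseq b k := aseq_lower b hb k
  -- pointwise bounds
  have hlower : ∀ k, 0 ≤ f k := by
    intro k
    exact div_nonneg (log_nat_nonneg _) (by positivity)
  have hupper : ∀ k, f k ≤ U k := by
    intro k
    set n := {v ∈ Lang b | v.length = aseq b k}.ncard with hn
    set N := (Acal b k).ncard with hN
    set a := aseq b k with haa
    set P := ∏ i ∈ Finset.range k, b (i + 1) with hPP
    have h1 : n ≤ 2 * a ^ 2 * N ^ 2 := count_bound b hb k
    have h2 : N ≤ 2 ^ P := Acal_card b k
    have hNpos : 1 ≤ N := Acal_card_pos b k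
    have hapos : 1 ≤ a := aseq_pos b hb k
    have haR : (1 : ℝ) ≤ (a : ℝ) := by exact_mod_cast hapos
    have hNR : (1 : ℝ) ≤ (N : ℝ) := by exact_mod_cast hNpos
    -- log n ≤ log (2 a^2 N^2)
    have hlog1 : Real.log n ≤ Real.log ((2 * a ^ 2 * N ^ 2 : ℕ) : ℝ) := by
      rcases Nat.eq_zero_or_pos n with h | h
      · rw [h]
        simp only [Nat.cast_zero, Real.log_zero]
        apply Real.log_nonneg
        have : (1 : ℕ) ≤ 2 * a ^ 2 * N ^ 2 :=
          Nat.one_le_iff_ne_zero.mpr (by positivity)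
        exact_mod_cast this
      · apply Real.log_le_log (by exact_mod_cast h)
        exact_mod_cast h1
    have hlog2 : Real.log ((2 * a ^ 2 * N ^ 2 : ℕ) : ℝ)
        = Real.log 2 + 2 * Real.log a + 2 * Real.log N := by
      push_cast
      rw [Real.log_mul (by positivity) (by positivity),
        Real.log_mul (by norm_num) (by positivity),
        Real.log_pow, Real.log_pow]
      push_cast
      ring
    have hlog3 : Real.log N ≤ P * Real.log 2 := by
      calc Real.log N ≤ Real.log ((2 ^ P : ℕ) : ℝ) :=
            Real.log_le_log (by positivity) (by exact_mod_cast h2)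
        _ = P * Real.log 2 := by push_cast; rw [Real.log_pow]
    have hnum : Real.log n ≤ Real.log 2 + 2 * Real.log a + 2 * (P * Real.log 2) := by
      rw [hlog2] at hlog1
      linarith [hlog3]
    have hfk : f k ≤ (Real.log 2 + 2 * Real.log a + 2 * (P * Real.log 2)) / a := by
      have hap : (0:ℝ) < (a:ℝ) := by positivity
      exact (div_le_div_iff_of_pos_right hap).mpr hnum
    have hsplit : (Real.log 2 + 2 * Real.log a + 2 * (P * Real.log 2)) / a
        = Real.log 2 / a + 2 * (Real.log a / a) + 2 * (P * Real.log 2) / a := by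
      field_simp
    have hb1' : Real.log 2 / (a:ℝ) ≤ Real.log 2 / 2 ^ k := by
      apply div_le_div_of_nonneg_left (Real.log_nonneg (by norm_num)) (by positivity)
      exact_mod_cast ha2k k
    have hb3' : 2 * ((P:ℝ) * Real.log 2) / a ≤ 2 * Real.log 2 / 2 ^ k := by
      rw [div_le_div_iff₀ (by positivity) (by positivity)]
      have hPa : (2:ℝ) ^ k * (P:ℝ) ≤ (a:ℝ) := by exact_mod_cast aseq_lower b hb k
      nlinarith [Real.log_nonneg (show (1:ℝ) ≤ 2 by norm_num)]
    calc f k ≤ (Real.log 2 + 2 * Real.log a + 2 * (P * Real.log 2)) / a := hfk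
      _ = Real.log 2 / a + 2 * (Real.log a / a) + 2 * (P * Real.log 2) / a := hsplit
      _ ≤ Real.log 2 / 2 ^ k + 2 * (Real.log a / a) + 2 * Real.log 2 / 2 ^ k := by
          have := hb1'
          have := hb3'
          linarith
      _ = U k := rfl
  -- limit of the upper bound
  have hT1 : Filter.Tendsto (fun k : ℕ => Real.log 2 / 2 ^ k) Filter.atTop (nhds 0) := by
    have h := (tendsto_pow_atTop_nhds_zero_of_lt_one
      (show (0:ℝ) ≤ 1/2 by norm_num) (show (1:ℝ)/2 < 1 by norm_num)).const_mul (Real.log 2)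
    simp only [mul_zero] at h
    have he : (fun k : ℕ => Real.log 2 / 2 ^ k) = fun k : ℕ => Real.log 2 * (1/2:ℝ) ^ k := by
      funext k
      rw [div_pow, one_pow]
      ring
    rw [he]
    exact h
  have hT3 : Filter.Tendsto (fun k : ℕ => 2 * Real.log 2 / 2 ^ k) Filter.atTop (nhds 0) := by
    have h := hT1.const_mul (2:ℝ)
    simp only [mul_zero] at h
    convert h using 2 with k
    ring
  have haTop : Filter.Tendsto (fun k : ℕ => ((aseq b k : ℕ) : ℝ)) Filter.atTop Filter.atTop := by
    apply Filter.tendsto_atTop_mono ?_ (tendsto_pow_atTop_atTop_of_one_lt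
      (show (1:ℝ) < 2 by norm_num))
    intro k
    exact_mod_cast ha2k k
  have hlogdiv : Filter.Tendsto (fun x : ℝ => Real.log x / x) Filter.atTop (nhds 0) := by
    have h := Real.tendsto_pow_log_div_mul_add_atTop 1 0 1 one_ne_zero
    simp only [pow_one, one_mul, add_zero] at h
    exact h
  have hT2 : Filter.Tendsto
      (fun k : ℕ => 2 * (Real.log (aseq b k) / (aseq b k : ℝ))) Filter.atTop (nhds 0) := by
    have h := (hlogdiv.comp haTop).const_mul (2:ℝ)
    simp only [mul_zero] at h
    exact h
  have hUlim : Filter.Tendsto U Filter.atTop (nhds 0) := by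
    have h := (hT1.add hT2).add hT3
    simp only [add_zero] at h
    exact h
  exact tendsto_of_tendsto_of_tendsto_of_le_of_le tendsto_const_nhds hUlim hlower hupper
end
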